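/- In the concrete autonomous-car model, the set of achievement-cause indices of the causal setting with narrative σ1 started in S0 and effect damaged is exactly {0, 2, 3, 4}; that is, AchCause σ1 S0 (fun s => s.damaged = true) i holds if and only if i ∈ {0, 2, 3, 4}. In particular turn J (index 1) is not an achievement cause, and the achievement causal chain consists of turn K executed after 4 actions, drive J K executed after 3 actions, hack executed after 2 actions, and drive I J executed in the initial situation. -/
import Mathlib


inductive Loc : Type
  | I | J | K
deriving DecidableEq

open Loc

def connected : Loc → Loc → Prop
  | I, J => True
  | J, I => True
  | J, K => True
  | K, J => True
  | _, _ => False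

inductive Act : Type
  | drive (i j : Loc)
  | turn (i : Loc)
  | hack
deriving DecidableEq

open Act

structure State : Type where
  pos : Loc
  corrupted : Bool
  damaged : Bool

def step : Act → State → State
  | drive _ j, s => ⟨j, s.corrupted, s.damaged⟩
  | turn _, s => ⟨s.pos, s.corrupted, s.corrupted || s.damaged⟩
  | hack, s => ⟨s.pos, true, s.damaged⟩

def poss : Act → State → Prop
  | drive i j, s => s.pos = i ∧ i ≠ j ∧ connected i j
  | turn i, s => s.pos = i
  | hack, _ => True

def run (l : List Act) (s : State) : State :=
  l.foldl (fun t a => step a t) s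

def executable (l : List Act) (s : State) : Prop :=
  ∀ k : Fin l.length, poss (l.get k) (run (l.take k) s)

def σ1 : List Act := [drive I J, turn J, hack, drive J K, turn K]

def S0 : State := ⟨I, false, false⟩

def S0star : State := ⟨I, true, false⟩

def AchCause : List Act → State → (State → Prop) → ℕ → Prop
  | l, s0, φ, i =>
    ∃ j, ∃ _h1 : 1 ≤ j, ∃ _h2 : j ≤ l.length,
      ¬ φ (run (l.take (j - 1)) s0) ∧
      (∀ k, j ≤ k → k ≤ l.length → φ (run (l.take k) s0)) ∧
      (i = j - 1 ∨
        AchCause (l.take (j - 1)) s0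
          (fun s => φ (step (l.get ⟨j - 1, by omega⟩) s) ∧
            poss (l.get ⟨j - 1, by omega⟩) s) i)
  termination_by l _ _ _ => l.length
  decreasing_by simp [List.length_take]; omega


instance : DecidableRel connected := fun i j => by
  cases i <;> cases j <;> first | exact isTrue trivial | exact isFalse (fun h => h)

instance : ∀ (a : Act) (s : State), Decidable (poss a s)
  | drive i j, s => by unfold poss; infer_instance
  | turn i, s => by unfold poss; infer_instance
  | hack, s => isTrue trivial

abbrev phi0 (s : State) : Prop := s.damaged = true
abbrev phi1 (s : State) : Prop := phi0 (step (turn K) s) ∧ poss (turn K) s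
abbrev phi2 (s : State) : Prop := phi1 (step (drive J K) s) ∧ poss (drive J K) s
abbrev phi3 (s : State) : Prop := phi2 (step hack s) ∧ poss hack s

lemma achCause_nil (s0 : State) (φ : State → Prop) (i : ℕ) : ¬ AchCause [] s0 φ i := by
  rw [AchCause]
  rintro ⟨j, h1, h2, -⟩
  simp at h2
  omega

lemma A2 (i : ℕ) : AchCause [drive I J, turn J] S0 phi3 i ↔ i = 0 := by
  rw [AchCause]
  constructor
  · rintro ⟨j, h1, h2, hneg, hall, hor | hrec⟩
    · simp at h2
      interval_cases j
      · omega
      · exact absurd (by decide) hneg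
    · simp at h2
      interval_cases j
      · simp at hrec
        exact absurd hrec (achCause_nil _ _ _)
      · exact absurd (by decide) hneg
  · rintro rfl
    exact ⟨1, by omega, by simp, by decide, by
      intro k hk1 hk2; simp at hk2; interval_cases k <;> decide, Or.inl rfl⟩

lemma A3 (i : ℕ) : AchCause [drive I J, turn J, hack] S0 phi2 i ↔ i = 0 ∨ i = 2 := by
  rw [AchCause]
  constructor
  · rintro ⟨j, h1, h2, hneg, hall, hor | hrec⟩ <;> simp at h2 <;> interval_cases j
    · exact absurd (hall 1 (by omega) (by decide)) (by decide)
    · exact absurd (hall 2 (by omega) (by decide)) (by decide)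
    · exact Or.inr (by omega)
    · exact absurd (hall 1 (by omega) (by decide)) (by decide)
    · exact absurd (hall 2 (by omega) (by decide)) (by decide)
    · exact Or.inl ((A2 i).mp hrec)
  · rintro (rfl | rfl)
    · exact ⟨3, by omega, by simp, by decide, by
        intro k hk1 hk2; simp at hk2; interval_cases k <;> decide,
        Or.inr ((A2 0).mpr rfl)⟩
    · exact ⟨3, by omega, by simp, by decide, by
        intro k hk1 hk2; simp at hk2; interval_cases k <;> decide, Or.inl rfl⟩

lemma A4 (i : ℕ) :
    AchCause [drive I J, turn J, hack, drive J K] S0 phi1 i ↔ i = 0 ∨ i = 2 ∨ i = 3 := by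
  rw [AchCause]
  constructor
  · rintro ⟨j, h1, h2, hneg, hall, hor | hrec⟩ <;> simp at h2 <;> interval_cases j
    · exact absurd (hall 1 (by omega) (by decide)) (by decide)
    · exact absurd (hall 2 (by omega) (by decide)) (by decide)
    · exact absurd (hall 3 (by omega) (by decide)) (by decide)
    · exact Or.inr (Or.inr (by omega))
    · exact absurd (hall 1 (by omega) (by decide)) (by decide)
    · exact absurd (hall 2 (by omega) (by decide)) (by decide)
    · exact absurd (hall 3 (by omega) (by decide)) (by decide)
    · rcases (A3 i).mp hrec with h | h
      · exact Or.inl h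
      · exact Or.inr (Or.inl h)
  · have key : ∀ k, 4 ≤ k → k ≤ List.length [drive I J, turn J, hack, drive J K] →
        phi1 (run (List.take k [drive I J, turn J, hack, drive J K]) S0) := by
      intro k hk1 hk2; simp at hk2; interval_cases k <;> decide
    rintro (rfl | rfl | rfl)
    · exact ⟨4, by omega, by simp, by decide, key, Or.inr ((A3 0).mpr (Or.inl rfl))⟩
    · exact ⟨4, by omega, by simp, by decide, key, Or.inr ((A3 2).mpr (Or.inr rfl))⟩
    · exact ⟨4, by omega, by simp, by decide, key, Or.inl rfl⟩

/-- the achievement-cause indices of ⟨σ1, S0, damaged⟩ are exactly {0, 2, 3, 4}. -/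
theorem achCause_sigma1_S0 :
    ∀ i : ℕ, AchCause σ1 S0 (fun s => s.damaged = true) i ↔ i ∈ ({0, 2, 3, 4} : Set ℕ) := by
  intro i
  simp only [Set.mem_insert_iff, Set.mem_singleton_iff]
  rw [AchCause]
  constructor
  · rintro ⟨j, h1, h2, hneg, hall, hor | hrec⟩ <;> simp [σ1] at h2 <;> interval_cases j
    · exact absurd (hall 1 (by omega) (by decide)) (by decide)
    · exact absurd (hall 2 (by omega) (by decide)) (by decide)
    · exact absurd (hall 3 (by omega) (by decide)) (by decide)
    · exact absurd (hall 4 (by omega) (by decide)) (by decide)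
    · exact Or.inr (Or.inr (Or.inr (by omega)))
    · exact absurd (hall 1 (by omega) (by decide)) (by decide)
    · exact absurd (hall 2 (by omega) (by decide)) (by decide)
    · exact absurd (hall 3 (by omega) (by decide)) (by decide)
    · exact absurd (hall 4 (by omega) (by decide)) (by decide)
    · rcases (A4 i).mp hrec with h | h | h
      · exact Or.inl h
      · exact Or.inr (Or.inl h)
      · exact Or.inr (Or.inr (Or.inl h))
  · have key : ∀ k, 5 ≤ k → k ≤ List.length σ1 →
        (fun s => s.damaged = true) (run (List.take k σ1) S0) := by
      intro k hk1 hk2; simp [σ1] at hk2; interval_cases k <;> decide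
    rintro (rfl | rfl | rfl | rfl)
    · exact ⟨5, by omega, by simp [σ1], by decide, key, Or.inr ((A4 0).mpr (Or.inl rfl))⟩
    · exact ⟨5, by omega, by simp [σ1], by decide, key, Or.inr ((A4 2).mpr (Or.inr (Or.inl rfl)))⟩
    · exact ⟨5, by omega, by simp [σ1], by decide, key, Or.inr ((A4 3).mpr (Or.inr (Or.inr rfl)))⟩
    · exact ⟨5, by omega, by simp [σ1], by decide, key, Or.inl rfl⟩
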